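/- arXiv:math/0702297 — 2 statements merged into one kernel-verified Lean document; each statement's English description precedes it below -/
import Mathlib

section
/- Fix λ > 0 and define f₊ : ℝ → ℝ by f₊(ρ) = 1 + λ e^{−3ρ}. Then for every ρ > 0: (i) the exact identity f₊''(ρ) + 2 (cosh ρ / sinh ρ) f₊'(ρ) − (3/4) f₊(ρ) ((f₊(ρ))⁴ − 1) = −6 λ ((cosh ρ / sinh ρ) − 1) e^{−3ρ} − (3/4)(10 x² + 10 x³ + 5 x⁴ + x⁵) holds, where x = λ e^{−3ρ}; (ii) consequently this quantity is strictly negative for all ρ > 0. -/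
open Real

/-
Since `f₊' = -3x` and `f₊'' = 9x` with `x = λ e^{-3ρ}`, and
`(1 + x)((1 + x)⁴ - 1) = 4x + 10x² + 10x³ + 5x⁴ + x⁵`, the linear terms combine to
`9x - 6 coth ρ · x - 3x = -6 (coth ρ - 1) x`, which gives the identity. Both summands on the
right are negative because `coth ρ > 1` for `ρ > 0` and `x > 0`.
-/

lemma deriv_const_add_mul_exp_mul (a l c : ℝ) :
    deriv (fun r : ℝ => a + l * exp (c * r)) = fun r => c * l * exp (c * r) := by
  funext r
  refine ((((hasDerivAt_id' r).const_mul c).exp.const_mul l).const_add a).deriv.trans ?_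
  ring

lemma deriv_mul_exp_mul (l c : ℝ) :
    deriv (fun r : ℝ => l * exp (c * r)) = fun r => c * l * exp (c * r) := by
  simpa using deriv_const_add_mul_exp_mul 0 l c

lemma one_lt_cosh_div_sinh {ρ : ℝ} (hρ : 0 < ρ) : 1 < cosh ρ / sinh ρ :=
  (one_lt_div (sinh_pos_iff.mpr hρ)).mpr (sinh_lt_cosh ρ)

lemma one_add_mul_one_add_pow_four_sub_one (x : ℝ) :
    (1 + x) * ((1 + x) ^ 4 - 1) = 4 * x + (10 * x ^ 2 + 10 * x ^ 3 + 5 * x ^ 4 + x ^ 5) := by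
  ring

/-- For `λ > 0` and `f₊(ρ) = 1 + λ e^{−3ρ}`, for every `ρ > 0`:
(i) the exact identity
`f₊'' + 2 coth(ρ) f₊' − (3/4) f₊ (f₊⁴ − 1)
  = −6 λ (coth ρ − 1) e^{−3ρ} − (3/4)(10x² + 10x³ + 5x⁴ + x⁵)` with `x = λ e^{−3ρ}`;
(ii) this quantity is strictly negative. -/
theorem barrier_identity_upper (l : ℝ) (hl : 0 < l) (ρ : ℝ) (hρ : 0 < ρ) :
    let f : ℝ → ℝ := fun r => 1 + l * Real.exp (-3 * r)
    let x : ℝ := l * Real.exp (-3 * ρ)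
    (deriv (deriv f) ρ + 2 * (Real.cosh ρ / Real.sinh ρ) * deriv f ρ
          - (3 / 4) * f ρ * ((f ρ) ^ 4 - 1)
        = -6 * l * (Real.cosh ρ / Real.sinh ρ - 1) * Real.exp (-3 * ρ)
          - (3 / 4) * (10 * x ^ 2 + 10 * x ^ 3 + 5 * x ^ 4 + x ^ 5)) ∧
      deriv (deriv f) ρ + 2 * (Real.cosh ρ / Real.sinh ρ) * deriv f ρ
          - (3 / 4) * f ρ * ((f ρ) ^ 4 - 1) < 0 := by
  intro f x
  have hf' : deriv f = fun r => -3 * l * exp (-3 * r) := deriv_const_add_mul_exp_mul 1 l (-3)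
  have hf'' : deriv (deriv f) = fun r => -3 * (-3 * l) * exp (-3 * r) := by
    rw [hf']; exact deriv_mul_exp_mul (-3 * l) (-3)
  have hfρ : f ρ = 1 + x := rfl
  have identity : deriv (deriv f) ρ + 2 * (cosh ρ / sinh ρ) * deriv f ρ
        - (3 / 4) * f ρ * ((f ρ) ^ 4 - 1)
      = -6 * l * (cosh ρ / sinh ρ - 1) * exp (-3 * ρ)
        - (3 / 4) * (10 * x ^ 2 + 10 * x ^ 3 + 5 * x ^ 4 + x ^ 5) := by
    rw [hf'', hf', mul_assoc _ (f ρ), hfρ, one_add_mul_one_add_pow_four_sub_one]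
    ring
  refine ⟨identity, identity ▸ ?_⟩
  have hx : 0 < x := mul_pos hl (exp_pos _)
  have hcoth : 0 < cosh ρ / sinh ρ - 1 := sub_pos.mpr (one_lt_cosh_div_sinh hρ)
  have : 0 < 6 * l * (cosh ρ / sinh ρ - 1) * exp (-3 * ρ) := by positivity
  have : 0 < 10 * x ^ 2 + 10 * x ^ 3 + 5 * x ^ 4 + x ^ 5 := by positivity
  linarith
end

section
/- Let λ > 0 and f₋(ρ) = 1 − λ e^{−3ρ}. For every ρ > 0 satisfying λ ≤ e^{ρ}, one has f₋''(ρ) + 2 (cosh ρ / sinh ρ) f₋'(ρ) − (3/4) f₋(ρ) ((f₋(ρ))⁴ − 1) > 0. -/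
/-!
Write `x = λ e^{-3ρ}`, so that `f₋ = 1 - x`, `f₋' = 3x` and `f₋'' = -9x`. The operator then equals
`6x (coth ρ - 1) - (3/4) x² (10 - 10x + 5x² - x³)`. Since `coth ρ - 1 > 2e^{-2ρ} ≥ 2x` (the last
step is `λ ≤ e^ρ`) and the cubic factor is at most `10` for `x ≥ 0`, this exceeds
`12x² - (15/2)x² > 0`.
-/

open Real

theorem hasDerivAt_const_mul_exp_const_mul (c a r : ℝ) :
    HasDerivAt (fun r => c * exp (a * r)) (c * a * exp (a * r)) r := by
  have := ((hasDerivAt_id r).const_mul a).exp.const_mul c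
  simpa [mul_comm, mul_left_comm, mul_assoc] using this

theorem two_mul_exp_neg_two_mul_lt_coth_sub_one {ρ : ℝ} (hρ : 0 < ρ) :
    2 * exp (-2 * ρ) < cosh ρ / sinh ρ - 1 := by
  have hsinh : 0 < sinh ρ := sinh_pos_iff.mpr hρ
  have hcoth : cosh ρ / sinh ρ - 1 = exp (-ρ) / sinh ρ := by
    rw [← cosh_sub_sinh, sub_div, div_self hsinh.ne']
  have hsinh_lt : 2 * sinh ρ < exp ρ := by
    rw [sinh_eq]; linarith [exp_pos (-ρ)]
  have hexp : exp (-2 * ρ) * exp ρ = exp (-ρ) := by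
    rw [← exp_add]; ring_nf
  rw [hcoth, lt_div_iff₀ hsinh, ← hexp]
  nlinarith [exp_pos (-2 * ρ)]

theorem cubic_le_ten {x : ℝ} (hx : 0 ≤ x) : 10 - 10 * x + 5 * x ^ 2 - x ^ 3 ≤ 10 := by
  nlinarith [mul_nonneg hx (add_nonneg (sq_nonneg (x - 5 / 2)) (by norm_num : (0 : ℝ) ≤ 15 / 4))]

theorem barrier_operator_pos {x c : ℝ} (hx : 0 < x) (hc : 2 * x < c - 1) :
    0 < -9 * x + 2 * c * (3 * x) - 3 / 4 * (1 - x) * ((1 - x) ^ 4 - 1) := by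
  calc (0 : ℝ) < 6 * x * (2 * x) - 3 / 4 * x ^ 2 * 10 := by nlinarith
    _ ≤ 6 * x * (c - 1) - 3 / 4 * x ^ 2 * (10 - 10 * x + 5 * x ^ 2 - x ^ 3) := by
      gcongr
      exact cubic_le_ten hx.le
    _ = -9 * x + 2 * c * (3 * x) - 3 / 4 * (1 - x) * ((1 - x) ^ 4 - 1) := by ring

/-- For `λ > 0`, `f₋(ρ) = 1 − λ e^{−3ρ}`, and every `ρ > 0` with `λ ≤ e^ρ`, the
lower barrier is a strict subsolution:
`f₋'' + 2 coth(ρ) f₋' − (3/4) f₋ (f₋⁴ − 1) > 0`. -/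
theorem barrier_subsolution (l : ℝ) (hl : 0 < l) (ρ : ℝ) (hρ : 0 < ρ)
    (hlρ : l ≤ Real.exp ρ) :
    let f : ℝ → ℝ := fun r => 1 - l * Real.exp (-3 * r)
    deriv (deriv f) ρ + 2 * (Real.cosh ρ / Real.sinh ρ) * deriv f ρ
        - (3 / 4) * f ρ * ((f ρ) ^ 4 - 1) > 0 := by
  intro f
  have hf' : deriv f = fun r => 3 * l * exp (-3 * r) := funext fun r =>
    ((hasDerivAt_const_mul_exp_const_mul l (-3) r).const_sub 1).deriv.trans (by ring)
  have hf'' : deriv (deriv f) ρ = 3 * l * -3 * exp (-3 * ρ) := by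
    rw [hf']; exact (hasDerivAt_const_mul_exp_const_mul (3 * l) (-3) ρ).deriv
  have hx : 0 < l * exp (-3 * ρ) := by positivity
  have hx_le : l * exp (-3 * ρ) ≤ exp (-2 * ρ) :=
    calc l * exp (-3 * ρ) ≤ exp ρ * exp (-3 * ρ) := by gcongr
      _ = exp (-2 * ρ) := by rw [← exp_add]; ring_nf
  have hcoth : 2 * (l * exp (-3 * ρ)) < cosh ρ / sinh ρ - 1 := by
    linarith [two_mul_exp_neg_two_mul_lt_coth_sub_one hρ]
  rw [hf'', hf']
  linarith [barrier_operator_pos hx hcoth]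
end
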